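/- Suppose X is a reflexive Banach space and γ ∈ L^∞((0,T); X). Then the forward time-interpolations converge to γ weakly-* in L^∞((0,T); X) as τ → 0⁺, in the following sense: for every φ ∈ L¹((0,T); X*), ∫_0^T ⟨φ(t), [γ̄]_τ(t)⟩_{X*,X} dt → ∫_0^T ⟨φ(t), γ(t)⟩_{X*,X} dt as τ → 0⁺. -/

import Mathlib

open MeasureTheory Set Filter Topology
open scoped ENNReal NNReal

/-- Interval averages `γ_i := (1/τ) ∫_{t_{i-1}}^{t_i} γ(ς) dς` (Bochner integral),
with `t_i = iτ` and `γ` understood as extended by zero outside `(0,T)`. -/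
noncomputable def avgSeq {X : Type*} [NormedAddCommGroup X] [NormedSpace ℝ X]
    (τ : ℝ) (γ : ℝ → X) (i : ℕ) : X :=
  τ⁻¹ • ∫ s in Set.Ioc ((i : ℝ) * τ - τ) ((i : ℝ) * τ), γ s

/-- Forward time-interpolation: value `g i` on `(t_{i-1}, t_i]` for `i ≥ 1`,
and `g 0` on `(-∞, 0]`. -/
noncomputable def fwdInterp {X : Type*} (τ : ℝ) (g : ℕ → X) (t : ℝ) : X :=
  g ⌈t / τ⌉₊

/-- Backward time-interpolation: value `g i` on `(t_i, t_{i+1}]` for `i ≥ 0`,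
and `0` on `(-∞, 0]`. -/
noncomputable def bwdInterp {X : Type*} [Zero X] (τ : ℝ) (g : ℕ → X) (t : ℝ) : X :=
  if t ≤ 0 then 0 else g (⌈t / τ⌉₊ - 1)

/-- Linear time-interpolation:
`((t - t_{i-1})/τ) • g i + ((t_i - t)/τ) • g (i-1)` on `[t_{i-1}, t_i)` for `i ≥ 1`. -/
noncomputable def linInterp {X : Type*} [AddCommGroup X] [Module ℝ X]
    (τ : ℝ) (g : ℕ → X) (t : ℝ) : X :=
  if t < 0 then 0
  else ((t - (⌊t / τ⌋₊ : ℝ) * τ) / τ) • g (⌊t / τ⌋₊ + 1)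
    + (((⌊t / τ⌋₊ : ℝ) * τ + τ - t) / τ) • g ⌊t / τ⌋₊

/-- Nodal values for a function defined on `[0,T]`:
`γ_i = γ(t_i)` if `t_i ≤ T`, `γ_i = γ(t_{i-1})` if `t_{i-1} ≤ T < t_i`, and `0` otherwise. -/
noncomputable def nodalSeq {X : Type*} [Zero X] (τ T : ℝ) (γ : ℝ → X) (i : ℕ) : X :=
  if (i : ℝ) * τ ≤ T then γ ((i : ℝ) * τ)
  else if (i : ℝ) * τ - τ ≤ T then γ ((i : ℝ) * τ - τ)
  else 0


/-!
For `t ≥ 0` the value `[γ̄]_τ(t)` is the average of `γ` over an interval of length `τ` containing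
`t`, so by the Lebesgue differentiation theorem it converges to `γ t` for a.e. `t` as `τ → 0⁺`.
Averages of `γ` are bounded by `‖γ‖_∞`, so `‖φ‖ ‖γ‖_∞` dominates the integrands and dominated
convergence concludes.
-/

section Interpolation

variable {X : Type*} [NormedAddCommGroup X] [NormedSpace ℝ X] {τ : ℝ}

theorem avgSeq_eq_setAverage_closedBall (hτ : 0 < τ) (γ : ℝ → X) (i : ℕ) :
    avgSeq τ γ i = ⨍ s in Metric.closedBall ((i : ℝ) * τ - τ / 2) (τ / 2), γ s := by
  have hball : Metric.closedBall ((i : ℝ) * τ - τ / 2) (τ / 2) = Icc ((i : ℝ) * τ - τ) (i * τ) := by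
    rw [Real.closedBall_eq_Icc]; congr 1 <;> ring
  rw [setAverage_eq, hball, integral_Icc_eq_integral_Ioc, measureReal_def, Real.volume_Icc,
    sub_sub_cancel, ENNReal.toReal_ofReal hτ.le, avgSeq]

theorem norm_avgSeq_le {γ : ℝ → X} {M : ℝ} (hτ : 0 < τ) (hM : ∀ᵐ s, ‖γ s‖ ≤ M) (i : ℕ) :
    ‖avgSeq τ γ i‖ ≤ M := by
  have hvol : volume (Ioc ((i : ℝ) * τ - τ) (i * τ)) = ENNReal.ofReal τ := by
    rw [Real.volume_Ioc, sub_sub_cancel]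
  have hint : ‖∫ s in Ioc ((i : ℝ) * τ - τ) (i * τ), γ s‖ ≤ M * τ := by
    have := norm_setIntegral_le_of_norm_le_const_ae (hvol ▸ ENNReal.ofReal_lt_top)
      (ae_restrict_of_ae hM)
    rwa [measureReal_def, hvol, ENNReal.toReal_ofReal hτ.le] at this
  rw [avgSeq, norm_smul, Real.norm_of_nonneg (inv_nonneg.2 hτ.le)]
  calc τ⁻¹ * ‖∫ s in Ioc ((i : ℝ) * τ - τ) (i * τ), γ s‖ ≤ τ⁻¹ * (M * τ) := by gcongr
    _ = M := by field_simp

theorem stronglyMeasurable_fwdInterp {Y : Type*} [TopologicalSpace Y] (τ : ℝ) (g : ℕ → Y) :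
    StronglyMeasurable (fwdInterp τ g) :=
  StronglyMeasurable.of_discrete.comp_measurable (Nat.measurable_ceil.comp (measurable_div_const τ))

theorem mem_Icc_ceil_div_mul {t : ℝ} (hτ : 0 < τ) (ht : 0 ≤ t) :
    t ∈ Icc ((⌈t / τ⌉₊ : ℝ) * τ - τ) (⌈t / τ⌉₊ * τ) := by
  have hle : t / τ ≤ ⌈t / τ⌉₊ := Nat.le_ceil _
  have hlt : (⌈t / τ⌉₊ : ℝ) < t / τ + 1 := Nat.ceil_lt_add_one (div_nonneg ht hτ.le)
  rw [div_le_iff₀ hτ] at hle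
  rw [← sub_lt_iff_lt_add, lt_div_iff₀ hτ] at hlt
  constructor <;> linarith

theorem ae_tendsto_fwdInterp_avgSeq [CompleteSpace X] {γ : ℝ → X} (hγ : LocallyIntegrable γ) :
    ∀ᵐ t, 0 ≤ t → Tendsto (fun τ ↦ fwdInterp τ (avgSeq τ γ) t) (𝓝[>] 0) (𝓝 (γ t)) := by
  filter_upwards [IsUnifLocDoublingMeasure.ae_tendsto_average volume hγ 1] with t hdiff ht
  have hhalf : Tendsto (fun τ : ℝ ↦ τ / 2) (𝓝[>] 0) (𝓝[>] 0) :=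
    tendsto_nhdsWithin_of_tendsto_nhds_of_eventually_within _
      (by simpa using ((tendsto_id (x := 𝓝 (0 : ℝ))).div_const 2).mono_left nhdsWithin_le_nhds)
      (eventually_nhdsWithin_of_forall fun τ (hτ : 0 < τ) ↦ half_pos hτ)
  have hmem : ∀ᶠ τ in 𝓝[>] 0, t ∈ Metric.closedBall ((⌈t / τ⌉₊ : ℝ) * τ - τ / 2) (1 * (τ / 2)) := by
    filter_upwards [self_mem_nhdsWithin] with τ hτ
    obtain ⟨h₁, h₂⟩ := mem_Icc_ceil_div_mul hτ ht
    rw [one_mul, Real.closedBall_eq_Icc]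
    constructor <;> linarith
  refine (hdiff _ _ hhalf hmem).congr' ?_
  filter_upwards [self_mem_nhdsWithin] with τ hτ
  exact (avgSeq_eq_setAverage_closedBall hτ γ _).symm

end Interpolation

theorem forward_interp_weakStar_convergence_general
    {X : Type*} [NormedAddCommGroup X] [NormedSpace ℝ X] [CompleteSpace X]
    {T : ℝ} (γ : ℝ → X)
    (hzero : ∀ t, t ∉ Set.Ioo 0 T → γ t = 0)
    (hmem : MemLp γ ⊤ (volume.restrict (Set.Ioo 0 T))) :
    ∀ φ : ℝ → StrongDual ℝ X, Integrable φ (volume.restrict (Set.Ioo 0 T)) →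
      Tendsto (fun τ : ℝ => ∫ t in Set.Ioo (0:ℝ) T, φ t (fwdInterp τ (avgSeq τ γ) t))
        (𝓝[Set.Ioo (0:ℝ) 1] 0) (𝓝 (∫ t in Set.Ioo (0:ℝ) T, φ t (γ t))) := by
  intro φ hφ
  have hγ : MemLp γ ⊤ volume := by
    rwa [← indicator_eq_self.2 (fun t ht ↦ not_not.1 (mt (hzero t) ht)),
      memLp_indicator_iff_restrict measurableSet_Ioo]
  obtain ⟨M, hM⟩ : ∃ M : ℝ, ∀ᵐ s, ‖γ s‖ ≤ M := by
    have hsup := hγ.2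
    rw [eLpNorm_exponent_top] at hsup
    obtain ⟨C, hC⟩ := eLpNormEssSup_lt_top_iff_isBoundedUnder.1 hsup
    exact ⟨C, hC⟩
  have hτ : ∀ᶠ τ in 𝓝[Ioo (0:ℝ) 1] 0, 0 < τ := eventually_nhdsWithin_of_forall fun τ hτ ↦ hτ.1
  refine tendsto_integral_filter_of_dominated_convergence (fun t ↦ ‖φ t‖ * M) ?_ ?_
    (hφ.norm.mul_const M) ?_
  · exact Eventually.of_forall fun τ ↦
      (ContinuousLinearMap.id ℝ (StrongDual ℝ X)).aestronglyMeasurable_comp₂ hφ.1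
        (stronglyMeasurable_fwdInterp τ _).aestronglyMeasurable
  · filter_upwards [hτ] with τ hτ
    exact Eventually.of_forall fun t ↦
      (φ t).le_of_opNorm_le_of_le le_rfl (norm_avgSeq_le hτ hM _)
  · filter_upwards [ae_restrict_of_ae (ae_tendsto_fwdInterp_avgSeq (hγ.locallyIntegrable le_top)),
      ae_restrict_mem measurableSet_Ioo] with t hlim ht
    exact ((φ t).continuous.tendsto _).comp
      ((hlim ht.1.le).mono_left (nhdsWithin_mono _ Ioo_subset_Ioi_self))

/-- If `X` is a reflexive Banach space and `γ ∈ L^∞((0,T);X)` (extended by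
zero outside `(0,T)`), then the forward time-interpolations converge to `γ` weakly-* in
`L^∞((0,T);X)` as `τ → 0⁺`: for every `φ ∈ L¹((0,T); X*)`,
`∫_0^T ⟨φ(t), [γ̄]_τ(t)⟩ dt → ∫_0^T ⟨φ(t), γ(t)⟩ dt`. -/
theorem forward_interp_weakStar_convergence
    {X : Type*} [NormedAddCommGroup X] [NormedSpace ℝ X] [CompleteSpace X]
    (hrefl : Function.Surjective (NormedSpace.inclusionInDoubleDual ℝ X))
    {T : ℝ} (hT : 0 < T) (γ : ℝ → X)
    (hzero : ∀ t, t ∉ Set.Ioo 0 T → γ t = 0)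
    (hmem : MemLp γ ⊤ (volume.restrict (Set.Ioo 0 T))) :
    ∀ φ : ℝ → StrongDual ℝ X, Integrable φ (volume.restrict (Set.Ioo 0 T)) →
      Tendsto (fun τ : ℝ => ∫ t in Set.Ioo (0:ℝ) T, φ t (fwdInterp τ (avgSeq τ γ) t))
        (𝓝[Set.Ioo (0:ℝ) 1] 0) (𝓝 (∫ t in Set.Ioo (0:ℝ) T, φ t (γ t))) :=
  forward_interp_weakStar_convergence_general γ hzero hmem
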